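/- For every x ∈ ℝ^n and μ > 0: |ω_μ(x) − ω(x)| ≤ (μ²/2)·L·n. -/

import Mathlib

/-!
Second-order Taylor bound plus two Gaussian moments. An `L`-Lipschitz gradient gives
`|ω y - ω x - ⟪∇ω x, y - x⟫| ≤ L/2 ‖y - x‖²`. Take `y = x + μ v` and integrate over `v`:
the linear term integrates to zero because the Gaussian is centred, and `∫ ‖v‖² dγ_n = n`.
These moments are those of `ProbabilityTheory.stdGaussian`, which is the measure `γ_n` here
because the density of `γ_n` factors into one-dimensional Gaussian densities.
-/

open MeasureTheory

/-- The standard Gaussian measure on ℝ^n, with density (2π)^{-n/2} e^{-‖v‖²/2}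
with respect to Lebesgue measure. -/
noncomputable def stdGaussian (n : ℕ) : Measure (EuclideanSpace ℝ (Fin n)) :=
  volume.withDensity fun v =>
    ENNReal.ofReal ((2 * Real.pi) ^ (-(n : ℝ) / 2) * Real.exp (-‖v‖ ^ 2 / 2))

open scoped RealInnerProductSpace ENNReal

theorem abs_sub_sub_inner_le_of_lipschitz_gradient {F : Type*} [NormedAddCommGroup F]
    [InnerProductSpace ℝ F] [CompleteSpace F] {f : F → ℝ} {g : F → F} {L : ℝ}
    (hf : ∀ x, HasGradientAt f (g x) x) (hg : ∀ a b, ‖g a - g b‖ ≤ L * ‖a - b‖) (a b : F) :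
    |f b - f a - ⟪g a, b - a⟫| ≤ L / 2 * ‖b - a‖ ^ 2 := by
  set d := b - a
  have hderiv : ∀ t : ℝ, HasDerivAt (fun s : ℝ => f (a + s • d) - f a - s * ⟪g a, d⟫)
      ⟪g (a + t • d) - g a, d⟫ t := by
    intro t
    have hline : HasDerivAt (fun s : ℝ => a + s • d) d t := by
      simpa using ((hasDerivAt_id t).smul_const d).const_add a
    have hcomp : HasDerivAt (fun s : ℝ => f (a + s • d)) ⟪g (a + t • d), d⟫ t := by
      have h := (hf (a + t • d)).hasFDerivAt.comp_hasDerivAt t hline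
      simp only [InnerProductSpace.toDual_apply_apply] at h
      exact h
    rw [inner_sub_left]
    exact (hcomp.sub_const (f a)).sub (hasDerivAt_mul_const ⟪g a, d⟫)
  -- Fence the remainder `t ↦ f (a + t d) - f a - t ⟪g a, d⟫` on `[0, 1]` by `L/2 ‖d‖² t²`.
  have hbound := image_norm_le_of_norm_deriv_right_le_deriv_boundary (a := 0) (b := 1)
    (B := fun t => L / 2 * ‖d‖ ^ 2 * t ^ 2) (B' := fun t => L * ‖d‖ ^ 2 * t)
    (fun t _ => (hderiv t).continuousAt.continuousWithinAt)
    (fun t _ => (hderiv t).hasDerivWithinAt) (by simp)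
    (fun t => ((hasDerivAt_pow 2 t).const_mul (L / 2 * ‖d‖ ^ 2)).congr_deriv (by ring))
    (fun t ht => by
      calc ‖⟪g (a + t • d) - g a, d⟫‖ ≤ ‖g (a + t • d) - g a‖ * ‖d‖ := norm_inner_le_norm _ _
        _ ≤ L * ‖t • d‖ * ‖d‖ := by gcongr; simpa using hg (a + t • d) a
        _ = L * ‖d‖ ^ 2 * t := by rw [norm_smul, Real.norm_of_nonneg ht.1]; ring)
    (Set.right_mem_Icc.2 zero_le_one)
  simpa [d] using hbound

theorem abs_integral_comp_add_smul_sub_le {F : Type*} [NormedAddCommGroup F]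
    [InnerProductSpace ℝ F] [CompleteSpace F] [MeasurableSpace F] [BorelSpace F]
    {P : Measure F} [IsProbabilityMeasure P] (hP : MemLp id 2 P) (hP₀ : ∫ v, v ∂P = 0)
    {f : F → ℝ} {g : F → F} {L : ℝ}
    (hf : ∀ x, HasGradientAt f (g x) x) (hg : ∀ a b, ‖g a - g b‖ ≤ L * ‖a - b‖) (x : F) (μ : ℝ) :
    |(∫ v, f (x + μ • v) ∂P) - f x| ≤ μ ^ 2 / 2 * L * ∫ v, ‖v‖ ^ 2 ∂P := by
  set r : F → ℝ := fun v => f (x + μ • v) - f x - ⟪g x, μ • v⟫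
  have hr : ∀ v, |r v| ≤ μ ^ 2 / 2 * L * ‖v‖ ^ 2 := fun v => by
    have h := abs_sub_sub_inner_le_of_lipschitz_gradient hf hg x (x + μ • v)
    rwa [add_sub_cancel_left, norm_smul, mul_pow, Real.norm_eq_abs, sq_abs,
      show L / 2 * (μ ^ 2 * ‖v‖ ^ 2) = μ ^ 2 / 2 * L * ‖v‖ ^ 2 by ring] at h
  have hf_cont : Continuous f :=
    continuous_iff_continuousAt.2 fun y => (hf y).differentiableAt.continuousAt
  have hnorm_sq : Integrable (fun v => ‖v‖ ^ 2) P := hP.integrable_norm_pow two_ne_zero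
  have hr_int : Integrable r P :=
    (hnorm_sq.const_mul _).mono' (by fun_prop) (ae_of_all _ hr)
  have hlin_int : Integrable (fun v => ⟪g x, μ • v⟫) P :=
    ((hP.integrable one_le_two).smul μ).const_inner (g x)
  have hlin_mean : ∫ v, ⟪g x, μ • v⟫ ∂P = 0 := by
    simp_rw [real_inner_smul_right]
    rw [integral_const_mul, integral_inner (f := fun v => v) (hP.integrable one_le_two), hP₀,
      inner_zero_right, mul_zero]
  have hsplit : (∫ v, f (x + μ • v) ∂P) - f x = ∫ v, r v ∂P := by
    have hexpand : (fun v => f (x + μ • v)) = fun v => f x + ⟪g x, μ • v⟫ + r v := by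
      ext v; simp only [r]; ring
    have hconst_lin : Integrable (fun v => f x + ⟪g x, μ • v⟫) P :=
      (integrable_const _).add hlin_int
    rw [hexpand, integral_add hconst_lin hr_int, integral_add (integrable_const _) hlin_int,
      hlin_mean]
    simp
  calc |(∫ v, f (x + μ • v) ∂P) - f x| = ‖∫ v, r v ∂P‖ := by rw [hsplit, Real.norm_eq_abs]
    _ ≤ ∫ v, μ ^ 2 / 2 * L * ‖v‖ ^ 2 ∂P :=
        norm_integral_le_of_norm_le (hnorm_sq.const_mul _) (ae_of_all _ hr)
    _ = μ ^ 2 / 2 * L * ∫ v, ‖v‖ ^ 2 ∂P := integral_const_mul _ _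

theorem MeasureTheory.Measure.pi_withDensity_ofReal {ι : Type*} [Fintype ι] {α : ι → Type*}
    [∀ i, MeasurableSpace (α i)] (μ : ∀ i, Measure (α i)) [∀ i, SigmaFinite (μ i)]
    {f : ∀ i, α i → ℝ} (hf₀ : ∀ i x, 0 ≤ f i x) (hf : ∀ i, Integrable (f i) (μ i)) :
    Measure.pi (fun i => (μ i).withDensity fun x => ENNReal.ofReal (f i x)) =
      (Measure.pi μ).withDensity fun x => ENNReal.ofReal (∏ i, f i (x i)) := by
  refine Measure.pi_eq fun s hs => ?_
  rw [withDensity_apply _ (MeasurableSet.univ_pi hs), Measure.restrict_pi_pi,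
    ← ofReal_integral_eq_lintegral_ofReal
      (Integrable.fintype_prod_dep fun i => (hf i).restrict)
      (ae_of_all _ fun x => Finset.prod_nonneg fun i _ => hf₀ i (x i)),
    integral_fintype_prod_eq_prod, ENNReal.ofReal_prod_of_nonneg
      fun i _ => setIntegral_nonneg_of_ae (ae_of_all _ (hf₀ i))]
  refine Finset.prod_congr rfl fun i _ => ?_
  rw [withDensity_apply _ (hs i),
    ofReal_integral_eq_lintegral_ofReal (hf i).restrict (ae_of_all _ (hf₀ i))]

theorem MeasureTheory.MeasurePreserving.map_withDensity_comp {α β : Type*} [MeasurableSpace α]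
    [MeasurableSpace β] {μ : Measure α} {ν : Measure β} {e : α → β}
    (he : MeasurePreserving e μ ν) (he' : MeasurableEmbedding e) (f : β → ℝ≥0∞) :
    (μ.withDensity (f ∘ e)).map e = ν.withDensity f := by
  ext s hs
  rw [Measure.map_apply he.measurable hs, withDensity_apply _ (he.measurable hs),
    withDensity_apply _ hs]
  exact he.setLIntegral_comp_preimage_emb he' f s

open ProbabilityTheory Real in
theorem gaussian_density_toLp_eq_prod_gaussianPDFReal {n : ℕ} (y : Fin n → ℝ) :
    (2 * π) ^ (-(n : ℝ) / 2) * exp (-‖WithLp.toLp 2 y‖ ^ 2 / 2) =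
      ∏ i, gaussianPDFReal 0 1 (y i) := by
  have hconst : (2 * π) ^ (-(n : ℝ) / 2) = (√(2 * π))⁻¹ ^ n := by
    rw [sqrt_eq_rpow, ← rpow_neg (by positivity), ← rpow_natCast, ← rpow_mul (by positivity)]
    ring_nf
  simp only [gaussianPDFReal, Finset.prod_mul_distrib, Finset.prod_const, Finset.card_univ,
    Fintype.card_fin, ← exp_sum, EuclideanSpace.real_norm_sq_eq, hconst]
  simp [Finset.sum_div, neg_div]

open ProbabilityTheory in
theorem stdGaussian_eq_stdGaussian (n : ℕ) :
    stdGaussian n = ProbabilityTheory.stdGaussian (EuclideanSpace ℝ (Fin n)) := by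
  have hgauss : gaussianReal 0 1 =
      volume.withDensity fun x => ENNReal.ofReal (gaussianPDFReal 0 1 x) :=
    gaussianReal_of_var_ne_zero 0 one_ne_zero
  have hdensity : (fun y : Fin n → ℝ => ENNReal.ofReal (∏ i, gaussianPDFReal 0 1 (y i))) =
      (fun v : EuclideanSpace ℝ (Fin n) => ENNReal.ofReal
        ((2 * Real.pi) ^ (-(n : ℝ) / 2) * Real.exp (-‖v‖ ^ 2 / 2))) ∘ WithLp.toLp 2 := by
    ext y
    simp [gaussian_density_toLp_eq_prod_gaussianPDFReal]
  rw [← map_pi_eq_stdGaussian, hgauss, Measure.pi_withDensity_ofReal _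
    (fun _ => gaussianPDFReal_nonneg 0 1) (fun _ => integrable_gaussianPDFReal 0 1), ← volume_pi,
    hdensity, (PiLp.volume_preserving_toLp (Fin n)).map_withDensity_comp
      (MeasurableEquiv.toLp 2 (Fin n → ℝ)).measurableEmbedding]
  rfl

namespace ProbabilityTheory

variable {E : Type*} [NormedAddCommGroup E] [InnerProductSpace ℝ E] [FiniteDimensional ℝ E]
  [MeasurableSpace E] [BorelSpace E]

theorem integral_inner_mul_inner_stdGaussian (x y : E) :
    ∫ z, ⟪x, z⟫ * ⟪y, z⟫ ∂stdGaussian E = ⟪x, y⟫ := by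
  have h := covarianceBilin_apply (μ := stdGaussian E) IsGaussian.memLp_two_id x y
  rw [covarianceBilin_stdGaussian, innerSL_apply_apply] at h
  simpa using h.symm

theorem integral_norm_sq_stdGaussian :
    ∫ z, ‖z‖ ^ 2 ∂stdGaussian E = Module.finrank ℝ E := by
  let b := stdOrthonormalBasis ℝ E
  have hint : ∀ i, Integrable (fun z => ⟪b i, z⟫ ^ 2) (stdGaussian E) := fun i =>
    (IsGaussian.memLp_dual (stdGaussian E) (innerSL ℝ (b i)) 2 (by simp)).integrable_sq
  simp_rw [← b.sum_sq_inner_right, integral_finsetSum _ fun i _ => hint i, sq,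
    integral_inner_mul_inner_stdGaussian, real_inner_self_eq_norm_sq, b.orthonormal.1]
  simp

end ProbabilityTheory

theorem stmt_15_general {n : ℕ} (ω : EuclideanSpace ℝ (Fin n) → ℝ)
    (gradω : EuclideanSpace ℝ (Fin n) → EuclideanSpace ℝ (Fin n))
    (L μ : ℝ)
    (hω : ∀ x, HasGradientAt ω (gradω x) x)
    (hLip : ∀ a b, ‖gradω a - gradω b‖ ≤ L * ‖a - b‖)
    (x : EuclideanSpace ℝ (Fin n)) :
    |(∫ v, ω (x + μ • v) ∂stdGaussian n) - ω x| ≤ μ ^ 2 / 2 * L * n := by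
  rw [stdGaussian_eq_stdGaussian]
  have h := abs_integral_comp_add_smul_sub_le ProbabilityTheory.IsGaussian.memLp_two_id
    ProbabilityTheory.integral_id_stdGaussian hω hLip x μ
  rwa [ProbabilityTheory.integral_norm_sq_stdGaussian, finrank_euclideanSpace_fin] at h

/-- for the Gaussian smoothing ω_μ(x) = ∫ ω(x + μv) dγ_n(v) of a C¹
function ω with L-Lipschitz gradient: |ω_μ(x) − ω(x)| ≤ (μ²/2)·L·n. -/
theorem stmt_15 {n : ℕ} (ω : EuclideanSpace ℝ (Fin n) → ℝ)
    (gradω : EuclideanSpace ℝ (Fin n) → EuclideanSpace ℝ (Fin n))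
    (L μ : ℝ) (hL : 0 < L) (hμ : 0 < μ)
    (hω : ∀ x, HasGradientAt ω (gradω x) x)
    (hLip : ∀ a b, ‖gradω a - gradω b‖ ≤ L * ‖a - b‖)
    (x : EuclideanSpace ℝ (Fin n)) :
    |(∫ v, ω (x + μ • v) ∂stdGaussian n) - ω x| ≤ μ ^ 2 / 2 * L * n :=
  stmt_15_general ω gradω L μ hω hLip x
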